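/- arXiv:1704.00297 — 2 statements merged into one kernel-verified Lean document; each statement's English description precedes it below -/
import Mathlib

section
/- For a finite set S, n ∈ ℕ, and π ∈ Δ^{(n)}(S), the entropy of the type class (with uniform measure) satisfies n·h(π) − |S|·ln(n+1) ≤ ln|T^{(n)}_π S| ≤ n·h(π). In particular, if X = (S,p) has a rational distribution with denominator n, then n·Ent(X) − |S|·ln(n+1) ≤ Ent(T^{(n)}X) ≤ n·Ent(X), where T^{(n)}X is the true type equipped with the uniform distribution. -/
open scoped Classical BigOperators
open Finset

noncomputable section

/-- A probability distribution on a finite set. -/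
def IsDist {S : Type*} [Fintype S] (p : S → ℝ) : Prop :=
  (∀ x, 0 ≤ p x) ∧ ∑ x, p x = 1

/-- Shannon entropy (natural logarithm). -/
def ent {S : Type*} [Fintype S] (p : S → ℝ) : ℝ :=
  -∑ x, p x * Real.log (p x)

/-- Relative entropy (Kullback–Leibler divergence). -/
def KL {S : Type*} [Fintype S] (p q : S → ℝ) : ℝ :=
  ∑ x, p x * Real.log (p x / q x)

/-- The n-fold product (Bernoulli) distribution. -/
def powDist {S : Type*} [Fintype S] (p : S → ℝ) (n : ℕ) : (Fin n → S) → ℝ :=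
  fun f => ∏ i, p (f i)

/-- Tensor product of two distributions. -/
def prodDist {S T : Type*} [Fintype S] [Fintype T] (p : S → ℝ) (q : T → ℝ) :
    S × T → ℝ :=
  fun z => p z.1 * q z.2

/-- Empirical distribution of a sequence. -/
def emp {S : Type*} [Fintype S] {n : ℕ} (f : Fin n → S) : S → ℝ :=
  fun a => ((univ.filter (fun i => f i = a)).card : ℝ) / n

/-- A coupling (joint distribution with given marginals). -/
def IsCoupling {S T : Type*} [Fintype S] [Fintype T]
    (w : S × T → ℝ) (p : S → ℝ) (q : T → ℝ) : Prop :=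
  IsDist w ∧ (∀ x, ∑ y, w (x, y) = p x) ∧ (∀ y, ∑ x, w (x, y) = q y)

/-- The intrinsic Kolmogorov–Sinai distance. -/
def kdist {S T : Type*} [Fintype S] [Fintype T] (p : S → ℝ) (q : T → ℝ) : ℝ :=
  sInf {d : ℝ | ∃ w : S × T → ℝ, IsCoupling w p q ∧ d = 2 * ent w - ent p - ent q}

end

/-!
Under the product measure `p^⊗n`, a sequence whose counts are `k = n p` has probability
`∏ p_a ^ k_a = exp (-n h(p))`; since these probabilities sum to at most one, the type class has at
most `exp (n h(p))` elements. Conversely, the type class of `p` is the most likely one under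
`p^⊗n`: by `|T_c| = n! / ∏ c_a!` this reduces to `k! k^c ≤ c! k^k` coordinatewise. As there are at
most `(n+1)^|S|` type classes, the one of `p` has probability at least `(n+1)^(-|S|)`.
-/

open Nat in
theorem Nat.factorial_mul_pow_le_factorial_mul_pow (k c : ℕ) :
    k ! * k ^ c ≤ c ! * k ^ k := by
  rcases le_total c k with hck | hkc
  · calc k ! * k ^ c = c ! * k.descFactorial (k - c) * k ^ c := by
          rw [← Nat.factorial_mul_descFactorial (Nat.sub_le k c), Nat.sub_sub_self hck]
      _ ≤ c ! * k ^ (k - c) * k ^ c := by gcongr; exact Nat.descFactorial_le_pow k _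
      _ = c ! * k ^ k := by rw [mul_assoc, ← pow_add, Nat.sub_add_cancel hck]
  · calc k ! * k ^ c = k ! * k ^ (c - k) * k ^ k := by
          rw [mul_assoc, ← pow_add, Nat.sub_add_cancel hkc]
      _ ≤ c ! * k ^ k := by gcongr; exact Nat.factorial_mul_pow_sub_le_factorial hkc

lemma prod_pow_eq_exp_neg_mul_ent {S : Type*} [Fintype S] {p : S → ℝ} (hp : ∀ a, 0 ≤ p a)
    {k : S → ℕ} {m : ℝ} (hk : ∀ a, (k a : ℝ) = m * p a) :
    ∏ a, p a ^ k a = Real.exp (-(m * ent p)) := by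
  have hterm a : p a ^ k a = Real.exp (m * (p a * Real.log (p a))) := by
    rcases (hp a).eq_or_lt with hpa | hpa
    · have hka : (k a : ℝ) = 0 := by rw [hk, ← hpa, mul_zero]
      norm_cast at hka
      simp [← hpa, hka]
    · rw [← Real.exp_log (pow_pos hpa _), Real.log_pow, hk]
      ring_nf
  rw [prod_congr rfl fun a _ => hterm a, ← Real.exp_sum, ent, ← mul_sum]
  ring_nf

namespace MethodOfTypes

open Nat

section Counting

variable {ι S : Type*} [Fintype ι]

noncomputable def count (xs : ι → S) (a : S) : ℕ := #{i | xs i = a}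

lemma count_eq_card_subtype (xs : ι → S) (a : S) :
    count xs a = Fintype.card {i // xs i = a} := by
  rw [count, Fintype.card_subtype]

lemma count_le (xs : ι → S) (a : S) : count xs a ≤ Fintype.card ι :=
  card_filter_le _ _

lemma count_comp_perm (xs : ι → S) (σ : Equiv.Perm ι) : count (xs ∘ σ) = count xs := by
  funext a
  simp only [count_eq_card_subtype]
  exact Fintype.card_congr (σ.subtypeEquiv fun _ => Iff.rfl)

lemma exists_perm_comp_eq_of_count_eq {xs ys : ι → S} (h : count xs = count ys) :
    ∃ σ : Equiv.Perm ι, ys ∘ σ = xs := by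
  have hfiber a : Fintype.card {i // xs i = a} = Fintype.card {i // ys i = a} := by
    rw [← count_eq_card_subtype, ← count_eq_card_subtype, h]
  exact ⟨Equiv.ofFiberEquiv fun a => Fintype.equivOfCardEq (hfiber a),
    funext (Equiv.ofFiberEquiv_map _)⟩

variable [Fintype S]

lemma sum_count (xs : ι → S) : ∑ a, count xs a = Fintype.card ι := by
  simp only [count]
  rw [← Finset.card_univ, card_eq_sum_card_fiberwise (fun i _ => mem_univ (xs i))]

lemma exists_count_eq {k : S → ℕ} (hk : ∑ a, k a = Fintype.card ι) :
    ∃ xs : ι → S, count xs = k := by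
  have e : ι ≃ Σ a, Fin (k a) := Fintype.equivOfCardEq (by simp [hk])
  refine ⟨fun i => (e i).1, funext fun a => ?_⟩
  rw [count_eq_card_subtype, ← Fintype.card_fin (k a)]
  exact Fintype.card_congr ((e.subtypeEquiv fun _ => Iff.rfl).trans (Equiv.sigmaSubtype a))

lemma prod_comp_eq_prod_pow_count {M : Type*} [CommMonoid M] (p : S → M) (xs : ι → S) :
    ∏ i, p (xs i) = ∏ a, p a ^ count xs a := by
  rw [← prod_fiberwise univ xs (fun i => p (xs i))]
  refine prod_congr rfl fun a _ => ?_
  rw [count, ← prod_const]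
  exact prod_congr rfl fun i hi => by rw [(mem_filter.mp hi).2]

variable [DecidableEq ι]

variable (ι) in
noncomputable def typeClass (c : S → ℕ) : Finset (ι → S) := {xs | count xs = c}

lemma mem_typeClass {xs : ι → S} {c : S → ℕ} : xs ∈ typeClass ι c ↔ count xs = c := by
  simp [typeClass]

lemma orbit_eq_typeClass (ys : ι → S) :
    MulAction.orbit (Equiv.Perm ι)ᵈᵐᵃ ys = (typeClass ι (count ys) : Set (ι → S)) := by
  ext xs
  simp only [MulAction.mem_orbit_iff, mem_coe, mem_typeClass]
  constructor
  · rintro ⟨g, rfl⟩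
    exact count_comp_perm ys (DomMulAct.mk.symm g)
  · intro h
    obtain ⟨σ, hσ⟩ := exists_perm_comp_eq_of_count_eq h
    exact ⟨DomMulAct.mk σ, hσ⟩

lemma card_typeClass_mul_prod_factorial (ys : ι → S) :
    #(typeClass ι (count ys)) * ∏ a, (count ys a)! = (Fintype.card ι)! := by
  have hstab : Nat.card (MulAction.stabilizer (Equiv.Perm ι)ᵈᵐᵃ ys) = ∏ a, (count ys a)! := by
    rw [← Nat.card_congr (Equiv.subtypeEquiv (p := fun g : Equiv.Perm ι => ys ∘ g = ys)
        DomMulAct.mk fun _ => DomMulAct.mem_stabilizer_iff.symm),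
      Nat.card_eq_fintype_card, DomMulAct.stabilizer_card]
    simp only [count_eq_card_subtype]
  rw [← Set.ncard_coe_finset, ← orbit_eq_typeClass, ← hstab, ← MulAction.index_stabilizer,
    mul_comm, Subgroup.card_mul_index, Nat.card_congr DomMulAct.mk.symm, Nat.card_perm,
    Nat.card_eq_fintype_card]

lemma card_typeClass_mul_prod_pow_le (xs ys : ι → S) :
    #(typeClass ι (count xs)) * ∏ a, count ys a ^ count xs a
      ≤ #(typeClass ι (count ys)) * ∏ a, count ys a ^ count ys a := by
  have hpos : 0 < (∏ a, (count xs a)!) * ∏ a, (count ys a)! := by positivity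
  refine Nat.le_of_mul_le_mul_right ?_ hpos
  calc #(typeClass ι (count xs)) * (∏ a, count ys a ^ count xs a)
        * ((∏ a, (count xs a)!) * ∏ a, (count ys a)!)
      = (#(typeClass ι (count xs)) * ∏ a, (count xs a)!)
          * ∏ a, (count ys a)! * count ys a ^ count xs a := by
        rw [prod_mul_distrib]; ring
    _ ≤ (#(typeClass ι (count ys)) * ∏ a, (count ys a)!)
          * ∏ a, (count xs a)! * count ys a ^ count ys a := by
        rw [card_typeClass_mul_prod_factorial, card_typeClass_mul_prod_factorial]
        exact Nat.mul_le_mul_left _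
          (prod_le_prod' fun a _ => Nat.factorial_mul_pow_le_factorial_mul_pow _ _)
    _ = #(typeClass ι (count ys)) * (∏ a, count ys a ^ count ys a)
          * ((∏ a, (count xs a)!) * ∏ a, (count ys a)!) := by
        rw [prod_mul_distrib]; ring

lemma card_image_count_le :
    #(univ.image (count : (ι → S) → S → ℕ)) ≤ (Fintype.card ι + 1) ^ Fintype.card S := by
  calc #(univ.image (count : (ι → S) → S → ℕ))
      ≤ #(Fintype.piFinset fun _ : S => range (Fintype.card ι + 1)) := by
        refine card_le_card fun c hc => ?_
        obtain ⟨xs, -, rfl⟩ := mem_image.mp hc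
        exact Fintype.mem_piFinset.mpr fun a => mem_range.mpr (Nat.lt_succ_of_le (count_le xs a))
    _ = (Fintype.card ι + 1) ^ Fintype.card S := by simp

lemma sum_typeClass_prod {R : Type*} [CommSemiring R] (p : S → R) (c : S → ℕ) :
    ∑ xs ∈ typeClass ι c, ∏ i, p (xs i) = #(typeClass ι c) * ∏ a, p a ^ c a := by
  rw [sum_congr rfl fun xs hxs => by rw [prod_comp_eq_prod_pow_count, mem_typeClass.mp hxs],
    sum_const, nsmul_eq_mul]

lemma sum_prod_eq_pow {R : Type*} [CommSemiring R] (p : S → R) :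
    ∑ xs : ι → S, ∏ i, p (xs i) = (∑ a, p a) ^ Fintype.card ι := by
  rw [← Fintype.prod_sum, prod_const, Finset.card_univ]

end Counting

section Empirical

variable {S : Type*} [Fintype S] {n : ℕ}

lemma emp_apply (ys : Fin n → S) (a : S) : emp ys a = count ys a / n := rfl

lemma emp_nonneg (ys : Fin n → S) (a : S) : 0 ≤ emp ys a := by
  rw [emp_apply]; positivity

lemma sum_emp (hn : n ≠ 0) (ys : Fin n → S) : ∑ a, emp ys a = 1 := by
  simp only [emp_apply, ← sum_div, ← Nat.cast_sum, sum_count, Fintype.card_fin]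
  exact div_self (Nat.cast_ne_zero.mpr hn)

lemma emp_eq_emp_iff (hn : n ≠ 0) {xs ys : Fin n → S} :
    emp xs = emp ys ↔ count xs = count ys := by
  simp only [funext_iff, emp_apply, div_left_inj' (Nat.cast_ne_zero.mpr hn : (n : ℝ) ≠ 0),
    Nat.cast_inj]

lemma exists_emp_eq (hn : n ≠ 0) {p : S → ℝ} (hp : IsDist p)
    (hden : ∀ x, ∃ k : ℕ, p x = (k : ℝ) / n) : ∃ ys : Fin n → S, emp ys = p := by
  choose k hk using hden
  have hkp a : (k a : ℝ) = n * p a := by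
    rw [hk, mul_div_cancel₀ _ (Nat.cast_ne_zero.mpr hn)]
  have hsum : ∑ a, k a = Fintype.card (Fin n) := by
    rw [Fintype.card_fin, ← Nat.cast_inj (R := ℝ), Nat.cast_sum]
    simp only [hkp, ← mul_sum, hp.2, mul_one]
  obtain ⟨ys, hys⟩ := exists_count_eq hsum
  exact ⟨ys, funext fun a => by rw [emp_apply, hys, hk]⟩

lemma card_subtype_emp_eq (hn : n ≠ 0) (ys : Fin n → S) :
    Nat.card {xs : Fin n → S // emp xs = emp ys} = #(typeClass (Fin n) (count ys)) := by
  rw [Nat.card_eq_fintype_card, Fintype.card_subtype, typeClass]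
  exact congrArg card (filter_congr fun xs _ => emp_eq_emp_iff hn)

lemma prod_emp_pow_count (hn : n ≠ 0) (ys : Fin n → S) :
    ∏ a, emp ys a ^ count ys a = Real.exp (-(n * ent (emp ys))) :=
  prod_pow_eq_exp_neg_mul_ent (emp_nonneg ys) fun a => by
    rw [emp_apply, mul_div_cancel₀ _ (Nat.cast_ne_zero.mpr hn)]

lemma sum_typeClass_prod_emp_le (xs ys : Fin n → S) :
    ∑ zs ∈ typeClass (Fin n) (count xs), ∏ i, emp ys (zs i)
      ≤ ∑ zs ∈ typeClass (Fin n) (count ys), ∏ i, emp ys (zs i) := by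
  have hprod (c : S → ℕ) (hc : ∑ a, c a = n) :
      ∏ a, emp ys a ^ c a = ((∏ a, count ys a ^ c a : ℕ) : ℝ) / (n : ℝ) ^ n := by
    simp only [emp_apply, div_pow, prod_div_distrib, prod_pow_eq_pow_sum, hc, Nat.cast_prod,
      Nat.cast_pow]
  have hcount (zs : Fin n → S) : ∑ a, count zs a = n := by rw [sum_count, Fintype.card_fin]
  rw [sum_typeClass_prod, sum_typeClass_prod, hprod _ (hcount xs), hprod _ (hcount ys),
    mul_div_assoc', mul_div_assoc']
  exact div_le_div_of_nonneg_right (by exact_mod_cast card_typeClass_mul_prod_pow_le xs ys)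
    (by positivity)

lemma card_typeClass_mul_exp_le_one (hn : n ≠ 0) (ys : Fin n → S) :
    #(typeClass (Fin n) (count ys)) * Real.exp (-(n * ent (emp ys))) ≤ 1 :=
  calc #(typeClass (Fin n) (count ys)) * Real.exp (-(n * ent (emp ys)))
      = ∑ zs ∈ typeClass (Fin n) (count ys), ∏ i, emp ys (zs i) := by
        rw [sum_typeClass_prod, prod_emp_pow_count hn]
    _ ≤ ∑ zs : Fin n → S, ∏ i, emp ys (zs i) :=
        sum_le_sum_of_subset_of_nonneg (subset_univ _)
          fun _ _ _ => prod_nonneg fun _ _ => emp_nonneg ys _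
    _ = 1 := by rw [sum_prod_eq_pow, sum_emp hn, one_pow]

lemma one_le_mul_card_typeClass_mul_exp (hn : n ≠ 0) (ys : Fin n → S) :
    1 ≤ ((n : ℝ) + 1) ^ Fintype.card S
      * (#(typeClass (Fin n) (count ys)) * Real.exp (-(n * ent (emp ys)))) :=
  calc (1 : ℝ) = ∑ zs : Fin n → S, ∏ i, emp ys (zs i) := by
        rw [sum_prod_eq_pow, sum_emp hn, one_pow]
    _ = ∑ c ∈ univ.image count, ∑ zs ∈ typeClass (Fin n) c, ∏ i, emp ys (zs i) :=
        (sum_fiberwise_of_maps_to (fun zs _ => mem_image_of_mem _ (mem_univ zs)) _).symm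
    _ ≤ ∑ c ∈ univ.image count,
          #(typeClass (Fin n) (count ys)) * Real.exp (-(n * ent (emp ys))) := by
        refine sum_le_sum fun c hc => ?_
        obtain ⟨xs, -, rfl⟩ := mem_image.mp hc
        rw [← prod_emp_pow_count hn, ← sum_typeClass_prod]
        exact sum_typeClass_prod_emp_le xs ys
    _ ≤ ((n : ℝ) + 1) ^ Fintype.card S
          * (#(typeClass (Fin n) (count ys)) * Real.exp (-(n * ent (emp ys)))) := by
        rw [sum_const, nsmul_eq_mul]
        have hcard := card_image_count_le (ι := Fin n) (S := S)
        rw [Fintype.card_fin] at hcard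
        gcongr
        exact_mod_cast hcard

theorem log_card_typeClass_bounds (hn : n ≠ 0) (ys : Fin n → S) :
    n * ent (emp ys) - Fintype.card S * Real.log (n + 1)
        ≤ Real.log #(typeClass (Fin n) (count ys)) ∧
      Real.log #(typeClass (Fin n) (count ys)) ≤ n * ent (emp ys) := by
  have hT : (0 : ℝ) < #(typeClass (Fin n) (count ys)) := by
    exact_mod_cast card_pos.mpr ⟨ys, mem_typeClass.mpr rfl⟩
  have hlower := Real.log_le_log one_pos (one_le_mul_card_typeClass_mul_exp hn ys)
  have hupper := Real.log_le_log (by positivity) (card_typeClass_mul_exp_le_one hn ys)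
  rw [Real.log_mul (by positivity) (by positivity), Real.log_mul hT.ne' (by positivity),
    Real.log_pow, Real.log_exp, Real.log_one] at hlower
  rw [Real.log_mul hT.ne' (by positivity), Real.log_exp, Real.log_one] at hupper
  constructor <;> linarith

end Empirical

end MethodOfTypes

theorem stmt8 {S : Type*} [Fintype S] (n : ℕ) (hn : 0 < n)
    (π : S → ℝ) (hπ : IsDist π) (hden : ∀ x, ∃ k : ℕ, π x = (k : ℝ) / n) :
    ((n : ℝ) * ent π - Fintype.card S * Real.log (n + 1)
        ≤ Real.log (Nat.card {xs : Fin n → S // emp xs = π}) ∧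
      Real.log (Nat.card {xs : Fin n → S // emp xs = π}) ≤ (n : ℝ) * ent π) ∧
    ∀ p : S → ℝ, IsDist p → (∀ x, ∃ k : ℕ, p x = (k : ℝ) / n) →
      ((n : ℝ) * ent p - Fintype.card S * Real.log (n + 1)
          ≤ Real.log (Nat.card {xs : Fin n → S // emp xs = p}) ∧
        Real.log (Nat.card {xs : Fin n → S // emp xs = p}) ≤ (n : ℝ) * ent p) := by
  have bounds (p : S → ℝ) (hp : IsDist p) (hden : ∀ x, ∃ k : ℕ, p x = (k : ℝ) / n) :
      (n : ℝ) * ent p - Fintype.card S * Real.log (n + 1)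
          ≤ Real.log (Nat.card {xs : Fin n → S // emp xs = p}) ∧
        Real.log (Nat.card {xs : Fin n → S // emp xs = p}) ≤ (n : ℝ) * ent p := by
    obtain ⟨ys, rfl⟩ := MethodOfTypes.exists_emp_eq hn.ne' hp hden
    rw [MethodOfTypes.card_subtype_emp_eq hn.ne']
    exact MethodOfTypes.log_card_typeClass_bounds hn.ne' ys
  exact ⟨bounds π hπ hden, bounds⟩
end

section
/- The intrinsic Kolmogorov–Sinai distance is subadditive under tensor products: for finite probability spaces X, Y, U, V, k(X⊗U, Y⊗V) ≤ k(X,Y) + k(U,V). -/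
open scoped Classical BigOperators
open Finset

/-! The tensor product of a coupling of `p, q` and a coupling of `u, v` is a coupling of `p ⊗ u`
and `q ⊗ v`; since entropy is additive on products, its cost `2 Ent(W) - Ent(X) - Ent(Y)` is the
sum of the two costs. Taking infima over both couplings gives subadditivity. -/

namespace IsDist

variable {S T : Type*} [Fintype S] [Fintype T]

lemma le_one {p : S → ℝ} (hp : IsDist p) (x : S) : p x ≤ 1 :=
  (Finset.single_le_sum (fun y _ => hp.1 y) (Finset.mem_univ x)).trans_eq hp.2

lemma prodDist {p : S → ℝ} {q : T → ℝ} (hp : IsDist p) (hq : IsDist q) :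
    IsDist (prodDist p q) :=
  ⟨fun z => mul_nonneg (hp.1 _) (hq.1 _), by
    simp only [_root_.prodDist, Fintype.sum_prod_type, ← Finset.mul_sum, hq.2, mul_one, hp.2]⟩

lemma comp_equiv {p : S → ℝ} (hp : IsDist p) (e : T ≃ S) : IsDist (p ∘ e) :=
  ⟨fun _ => hp.1 _, (Equiv.sum_comp e p).trans hp.2⟩

end IsDist

section Entropy

variable {S T : Type*} [Fintype S] [Fintype T]

lemma ent_nonneg {p : S → ℝ} (hp : IsDist p) : 0 ≤ ent p :=
  neg_nonneg.mpr <| Finset.sum_nonpos fun x _ =>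
    mul_nonpos_of_nonneg_of_nonpos (hp.1 x) (Real.log_nonpos (hp.1 x) (hp.le_one x))

lemma ent_comp_equiv (p : S → ℝ) (e : T ≃ S) : ent (p ∘ e) = ent p := by
  simp only [ent, Function.comp_apply, Equiv.sum_comp e (fun x => p x * Real.log (p x))]

lemma ent_prodDist {p : S → ℝ} {q : T → ℝ} (hp : ∑ x, p x = 1) (hq : ∑ y, q y = 1) :
    ent (prodDist p q) = ent p + ent q := by
  have hlog : ∀ x y, p x * q y * Real.log (p x * q y)
      = p x * Real.log (p x) * q y + p x * (q y * Real.log (q y)) := by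
    intro x y
    rcases eq_or_ne (p x) 0 with h | h
    · simp [h]
    rcases eq_or_ne (q y) 0 with h' | h'
    · simp [h']
    rw [Real.log_mul h h']
    ring
  simp only [ent, prodDist, Fintype.sum_prod_type, hlog, Finset.sum_add_distrib,
    ← Finset.mul_sum, ← Finset.sum_mul, hp, hq]
  ring

end Entropy

section Coupling

variable {S T S' T' : Type*} [Fintype S] [Fintype T] [Fintype S'] [Fintype T']

lemma isCoupling_prodDist {p : S → ℝ} {q : T → ℝ} (hp : IsDist p) (hq : IsDist q) :
    IsCoupling (prodDist p q) p q :=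
  ⟨hp.prodDist hq, fun x => by simp only [prodDist, ← Finset.mul_sum, hq.2, mul_one],
    fun y => by simp only [prodDist, ← Finset.sum_mul, hp.2, one_mul]⟩

def tensorCoupling (w : S × T → ℝ) (w' : S' × T' → ℝ) : (S × S') × (T × T') → ℝ :=
  prodDist w w' ∘ Equiv.prodProdProdComm S S' T T'

lemma IsCoupling.tensorCoupling {w : S × T → ℝ} {w' : S' × T' → ℝ}
    {p : S → ℝ} {q : T → ℝ} {u : S' → ℝ} {v : T' → ℝ}
    (hw : IsCoupling w p q) (hw' : IsCoupling w' u v) :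
    IsCoupling (tensorCoupling w w') (prodDist p u) (prodDist q v) := by
  refine ⟨(hw.1.prodDist hw'.1).comp_equiv _, fun x => ?_, fun y => ?_⟩
  · simp only [_root_.tensorCoupling, prodDist, Function.comp_apply, Equiv.prodProdProdComm,
      Equiv.coe_fn_mk, Fintype.sum_prod_type, ← Finset.sum_mul_sum, hw.2.1, hw'.2.1]
  · simp only [_root_.tensorCoupling, prodDist, Function.comp_apply, Equiv.prodProdProdComm,
      Equiv.coe_fn_mk, Fintype.sum_prod_type, ← Finset.sum_mul_sum, hw.2.2, hw'.2.2]

lemma ent_tensorCoupling {w : S × T → ℝ} {w' : S' × T' → ℝ} (hw : IsDist w) (hw' : IsDist w') :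
    ent (tensorCoupling w w') = ent w + ent w' := by
  rw [tensorCoupling, ent_comp_equiv, ent_prodDist hw.2 hw'.2]

end Coupling

section KDist

variable {S T : Type*} [Fintype S] [Fintype T]

lemma kdist_le {p : S → ℝ} {q : T → ℝ} {w : S × T → ℝ} (hw : IsCoupling w p q) :
    kdist p q ≤ 2 * ent w - ent p - ent q := by
  refine csInf_le ⟨-ent p - ent q, ?_⟩ ⟨w, hw, rfl⟩
  rintro _ ⟨w', hw', rfl⟩
  linarith [ent_nonneg hw'.1]

lemma le_kdist {p : S → ℝ} {q : T → ℝ} (hp : IsDist p) (hq : IsDist q) {d : ℝ}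
    (h : ∀ w, IsCoupling w p q → d ≤ 2 * ent w - ent p - ent q) : d ≤ kdist p q := by
  refine le_csInf ⟨_, _, isCoupling_prodDist hp hq, rfl⟩ ?_
  rintro _ ⟨w, hw, rfl⟩
  exact h w hw

end KDist

theorem stmt12 {S T S' T' : Type*} [Fintype S] [Fintype T] [Fintype S'] [Fintype T']
    (p : S → ℝ) (q : T → ℝ) (u : S' → ℝ) (v : T' → ℝ)
    (hp : IsDist p) (hq : IsDist q) (hu : IsDist u) (hv : IsDist v) :
    kdist (prodDist p u) (prodDist q v) ≤ kdist p q + kdist u v := by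
  have tensor_bound : ∀ w w', IsCoupling w p q → IsCoupling w' u v →
      kdist (prodDist p u) (prodDist q v)
        ≤ (2 * ent w - ent p - ent q) + (2 * ent w' - ent u - ent v) := by
    intro w w' hw hw'
    refine (kdist_le (hw.tensorCoupling hw')).trans_eq ?_
    rw [ent_tensorCoupling hw.1 hw'.1, ent_prodDist hp.2 hu.2, ent_prodDist hq.2 hv.2]
    ring
  suffices h : kdist (prodDist p u) (prodDist q v) - kdist u v ≤ kdist p q by linarith
  refine le_kdist hp hq fun w hw => ?_
  suffices h : kdist (prodDist p u) (prodDist q v) - (2 * ent w - ent p - ent q) ≤ kdist u v by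
    linarith
  exact le_kdist hu hv fun w' hw' => by linarith [tensor_bound w w' hw hw']
end
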